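/- (Proposition 3.) Let α ≥ 0, σ > 0, k > 0, T > 0, 0 ≤ θ ≤ T, t₀ ≥ 0, and let η and r satisfy 0 < σr ≤ η. Let φ : [t₀, t₀+θ] → ℝ be continuous with |φ(t)| ≤ r for all t ∈ [t₀, t₀+θ]. Let y be a differentiable function on [t₀, t₀+θ] with y(t₀) = y₀ ≥ η, y(t) > (σ/2)r for all t ∈ [t₀, t₀+θ], and y′(t) = α/(y(t) + (σ/2)φ(t)) − (k/2)(y(t) + (σ/2)φ(t)) on [t₀, t₀+θ]. Let y⁰(t) = [y₀² e^{−k(t−t₀)} + (2α/k)(1 − e^{−k(t−t₀)})]^{1/2}. Then |y(t) − y⁰(t)| ≤ C·r·(t − t₀) ≤ C·r·θ for all t ∈ [t₀, t₀+θ], where C = σk/2 + (4ασ/(3η²))·e^{kT/2}; in particular C is independent of t₀, y₀ and r. -/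

import Mathlib

/-- The explicit solution `y⁰(t) = [y₀² e^{−k(t−t₀)} + (2α/k)(1 − e^{−k(t−t₀)})]^{1/2}`
of the ODE `dy/dt = α/y − (k/2)y`, `y(t₀) = y₀`. -/
noncomputable def cirY0 (k α t₀ y₀ t : ℝ) : ℝ :=
  Real.sqrt (y₀ ^ 2 * Real.exp (-(k * (t - t₀))) +
    2 * α / k * (1 - Real.exp (-(k * (t - t₀)))))

/-!
Put `c = σr/2`. Since `F(v) = α/v − (k/2)v` is decreasing on `(0, ∞)` and
`y − c ≤ y + (σ/2)φ ≤ y + c`, the function `y − c` is a subsolution and `y + c` a supersolution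
of `z' = F(z)`. For these, `z²` satisfies the linear differential inequality
`(z²)' ≤ 2α − k z²` (resp. `≥`), so Grönwall's comparison principle traps `y` between the explicit
solutions started at `y₀ ∓ c`, shifted by `± c`. What remains is an algebraic estimate of how far
the explicit solution moves when its initial value moves by `c`.
-/

open Set Real

theorem le_gronwallBound_of_hasDerivWithinAt {f f' : ℝ → ℝ} {a b K ε : ℝ}
    (hf : ∀ x ∈ Icc a b, HasDerivWithinAt f (f' x) (Icc a b) x)
    (bound : ∀ x ∈ Ico a b, f' x ≤ K * f x + ε) :
    ∀ x ∈ Icc a b, f x ≤ gronwallBound (f a) K ε (x - a) :=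
  le_gronwallBound_of_liminf_deriv_right_le (fun x hx => (hf x hx).continuousWithinAt)
    (fun x hx _ hr => HasDerivWithinAt.liminf_right_slope_le
      ((hf x (Ico_subset_Icc_self hx)).mono_of_mem_nhdsWithin
        (Filter.mem_of_superset (Icc_mem_nhdsGE hx.2) (Icc_subset_Icc_left hx.1))) hr)
    le_rfl bound

theorem gronwallBound_neg (δ K ε x : ℝ) :
    gronwallBound (-δ) K (-ε) x = -gronwallBound δ K ε x := by
  unfold gronwallBound
  split_ifs <;> ring

theorem gronwallBound_le_of_hasDerivWithinAt {f f' : ℝ → ℝ} {a b K ε : ℝ}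
    (hf : ∀ x ∈ Icc a b, HasDerivWithinAt f (f' x) (Icc a b) x)
    (bound : ∀ x ∈ Ico a b, K * f x + ε ≤ f' x) :
    ∀ x ∈ Icc a b, gronwallBound (f a) K ε (x - a) ≤ f x := by
  intro x hx
  have h := le_gronwallBound_of_hasDerivWithinAt (f := -f) (f' := -f') (K := K) (ε := -ε)
    (fun x hx => (hf x hx).neg) (fun x hx => by simp only [Pi.neg_apply]; linarith [bound x hx])
    x hx
  rw [Pi.neg_apply, Pi.neg_apply, gronwallBound_neg] at h
  linarith

theorem cirY0_eq_sqrt_gronwallBound {k : ℝ} (hk : k ≠ 0) (α t₀ y₀ t : ℝ) :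
    cirY0 k α t₀ y₀ t = √(gronwallBound (y₀ ^ 2) (-k) (2 * α) (t - t₀)) := by
  rw [cirY0, gronwallBound_of_K_ne_0 (neg_ne_zero.mpr hk)]
  simp only [neg_mul, div_neg]
  ring_nf

theorem le_cirY0_of_deriv_le {k α a b : ℝ} (hk : k ≠ 0) {z z' : ℝ → ℝ}
    (hz : ∀ s ∈ Icc a b, HasDerivWithinAt z (z' s) (Icc a b) s)
    (hpos : ∀ s ∈ Ico a b, 0 < z s)
    (hsub : ∀ s ∈ Ico a b, z' s ≤ α / z s - k / 2 * z s) {t : ℝ} (ht : t ∈ Icc a b) :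
    z t ≤ cirY0 k α a (z a) t := by
  have hsq := le_gronwallBound_of_hasDerivWithinAt (f := fun s => z s ^ 2)
    (f' := fun s => 2 * z s * z' s) (K := -k) (ε := 2 * α)
    (fun s hs => by simpa [Pi.pow_def] using ((hz s hs).pow 2)) (fun s hs => by
      have := mul_le_mul_of_nonneg_left (hsub s hs) (hpos s hs).le
      rw [mul_sub, mul_div_cancel₀ _ (hpos s hs).ne'] at this
      linarith) t ht
  rw [cirY0_eq_sqrt_gronwallBound hk]
  exact (le_abs_self _).trans (Real.abs_le_sqrt hsq)

theorem cirY0_le_of_le_deriv {k α a b : ℝ} (hk : k ≠ 0) {z z' : ℝ → ℝ}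
    (hz : ∀ s ∈ Icc a b, HasDerivWithinAt z (z' s) (Icc a b) s)
    (hpos : ∀ s ∈ Icc a b, 0 < z s)
    (hsuper : ∀ s ∈ Ico a b, α / z s - k / 2 * z s ≤ z' s) {t : ℝ} (ht : t ∈ Icc a b) :
    cirY0 k α a (z a) t ≤ z t := by
  have hsq := gronwallBound_le_of_hasDerivWithinAt (f := fun s => z s ^ 2)
    (f' := fun s => 2 * z s * z' s) (K := -k) (ε := 2 * α)
    (fun s hs => by simpa [Pi.pow_def] using ((hz s hs).pow 2)) (fun s hs => by
      have hs' := Ico_subset_Icc_self hs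
      have := mul_le_mul_of_nonneg_left (hsuper s hs) (hpos s hs').le
      rw [mul_sub, mul_div_cancel₀ _ (hpos s hs').ne'] at this
      linarith) t ht
  rw [cirY0_eq_sqrt_gronwallBound hk, Real.sqrt_le_left (hpos t ht).le]
  exact hsq

theorem antitoneOn_div_sub_mul {α k : ℝ} (hα : 0 ≤ α) (hk : 0 ≤ k) :
    AntitoneOn (fun v : ℝ => α / v - k / 2 * v) (Ioi 0) := by
  intro w hw v _ hwv
  have := div_le_div_of_nonneg_left hα hw hwv
  have := mul_le_mul_of_nonneg_left hwv (by positivity : 0 ≤ k / 2)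
  simp only
  linarith

theorem sub_sub_sqrt_sub_sqrt_le {E M a b : ℝ} (hE0 : 0 < E) (hE1 : E ≤ 1) (hM : 0 ≤ M)
    (ha : 0 < a) (hab : a ≤ b) :
    b - a - (√(b ^ 2 * E + M) - √(a ^ 2 * E + M)) ≤ (b - a) * (1 - E + M / (2 * a * b)) := by
  have hb : 0 < b := ha.trans_le hab
  set A := √(a ^ 2 * E + M)
  set B := √(b ^ 2 * E + M)
  set D := M / (2 * a * b) with hD
  have hD0 : 0 ≤ D := by positivity
  have hDab : 2 * a * b * D = M := by rw [hD]; field_simp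
  have hA2 : A ^ 2 = a ^ 2 * E + M := Real.sq_sqrt (by positivity)
  have hB2 : B ^ 2 = b ^ 2 * E + M := Real.sq_sqrt (by positivity)
  have haE : a ^ 2 * E ≤ a ^ 2 := mul_le_of_le_one_right (by positivity) hE1
  have hbE : b ^ 2 * E ≤ b ^ 2 := mul_le_of_le_one_right (by positivity) hE1
  -- `√(u²E + M)` lies between `uE` and `u + M/(2u)`.
  have hA_le : A ≤ a + D * b :=
    Real.sqrt_le_iff.2 ⟨by positivity, by nlinarith [sq_nonneg (D * b)]⟩
  have hB_le : B ≤ b + D * a :=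
    Real.sqrt_le_iff.2 ⟨by positivity, by nlinarith [sq_nonneg (D * a)]⟩
  have hA_ge : a * E ≤ A :=
    Real.le_sqrt_of_sq_le <| by
      nlinarith [mul_le_of_le_one_right (by positivity : 0 ≤ a ^ 2 * E) hE1]
  have hB_ge : b * E ≤ B :=
    Real.le_sqrt_of_sq_le <| by
      nlinarith [mul_le_of_le_one_right (by positivity : 0 ≤ b ^ 2 * E) hE1]
  have hAB : 0 < A + B := by nlinarith
  have hkey : E * (A + B - a - b) ≤ D * (A + B) := by nlinarith
  -- After multiplying by `A + B`, the claim reads `(b - a) E (A + B - a - b) ≤ (b - a) D (A + B)`.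
  have hsq : (B - A) * (A + B) = E * (b - a) * (a + b) := by linear_combination hB2 - hA2
  refine le_of_mul_le_mul_right ?_ hAB
  nlinarith [mul_le_mul_of_nonneg_left hkey (sub_nonneg.2 hab)]

theorem sub_sub_cirY0_sub_cirY0_le {k α t₀ t a b : ℝ} (hk : 0 < k) (hα : 0 ≤ α) (ht : t₀ ≤ t)
    (ha : 0 < a) (hab : a ≤ b) :
    b - a - (cirY0 k α t₀ b t - cirY0 k α t₀ a t) ≤
      (b - a) * (k * (t - t₀) + α * (t - t₀) / (a * b)) := by
  set E := exp (-(k * (t - t₀)))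
  have hE : E ≤ 1 := exp_le_one_iff.2 (neg_nonpos.2 (mul_nonneg hk.le (sub_nonneg.2 ht)))
  have h1E : 1 - E ≤ k * (t - t₀) := by linarith [add_one_le_exp (-(k * (t - t₀)))]
  have hM : 2 * α / k * (1 - E) ≤ 2 * α * (t - t₀) := by
    calc 2 * α / k * (1 - E) ≤ 2 * α / k * (k * (t - t₀)) := by gcongr
      _ = 2 * α * (t - t₀) := by field_simp
  have hb : 0 < b := ha.trans_le hab
  calc b - a - (cirY0 k α t₀ b t - cirY0 k α t₀ a t)
      ≤ (b - a) * (1 - E + 2 * α / k * (1 - E) / (2 * a * b)) :=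
        sub_sub_sqrt_sub_sqrt_le (exp_pos _) hE (mul_nonneg (by positivity) (by linarith)) ha hab
    _ ≤ (b - a) * (k * (t - t₀) + 2 * α * (t - t₀) / (2 * a * b)) := by gcongr
    _ = (b - a) * (k * (t - t₀) + α * (t - t₀) / (a * b)) := by
        field_simp

theorem abs_sub_cirY0_le {k α t₀ t y₀ c u : ℝ} (hk : 0 < k) (hα : 0 ≤ α) (ht : t₀ ≤ t)
    (hc : 0 ≤ c) (hcy : c < y₀)
    (hlow : u - c ≤ cirY0 k α t₀ (y₀ - c) t) (hup : cirY0 k α t₀ (y₀ + c) t ≤ u + c) :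
    |u - cirY0 k α t₀ y₀ t| ≤ c * (k * (t - t₀) + α * (t - t₀) / ((y₀ - c) * y₀)) := by
  have hlower := sub_sub_cirY0_sub_cirY0_le hk hα ht (sub_pos.2 hcy) (sub_le_self y₀ hc)
  have hupper := sub_sub_cirY0_sub_cirY0_le hk hα ht (hc.trans_lt hcy) (le_add_of_nonneg_right hc)
  rw [sub_sub_cancel] at hlower
  rw [add_sub_cancel_left] at hupper
  have hdiv : α * (t - t₀) / (y₀ * (y₀ + c)) ≤ α * (t - t₀) / ((y₀ - c) * y₀) :=
    div_le_div_of_nonneg_left (mul_nonneg hα (sub_nonneg.2 ht))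
      (mul_pos (sub_pos.2 hcy) (hc.trans_lt hcy)) (by nlinarith)
  have := mul_le_mul_of_nonneg_left hdiv hc
  rw [abs_le]
  constructor <;> linarith

section Perturbed

variable {α k a b c : ℝ} {y φ : ℝ → ℝ} {t : ℝ}

theorem sub_le_cirY0_sub (hα : 0 ≤ α) (hk : 0 < k) (hφ : ∀ s ∈ Icc a b, |φ s| ≤ c)
    (hpos : ∀ s ∈ Icc a b, c < y s)
    (hder : ∀ s ∈ Icc a b,
      HasDerivWithinAt y (α / (y s + φ s) - k / 2 * (y s + φ s)) (Icc a b) s)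
    (ht : t ∈ Icc a b) :
    y t - c ≤ cirY0 k α a (y a - c) t := by
  refine le_cirY0_of_deriv_le hk.ne' (z := fun s => y s - c)
    (fun s hs => (hder s hs).sub_const c)
    (fun s hs => sub_pos.2 (hpos s (Ico_subset_Icc_self hs))) (fun s hs => ?_) ht
  have hs' := Ico_subset_Icc_self hs
  have hφs := abs_le.1 (hφ s hs')
  exact antitoneOn_div_sub_mul hα hk.le (sub_pos.2 (hpos s hs'))
    (show 0 < y s + φ s by linarith [hpos s hs']) (by linarith)

theorem cirY0_add_le_add (hα : 0 ≤ α) (hk : 0 < k) (hφ : ∀ s ∈ Icc a b, |φ s| ≤ c)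
    (hpos : ∀ s ∈ Icc a b, c < y s)
    (hder : ∀ s ∈ Icc a b,
      HasDerivWithinAt y (α / (y s + φ s) - k / 2 * (y s + φ s)) (Icc a b) s)
    (ht : t ∈ Icc a b) :
    cirY0 k α a (y a + c) t ≤ y t + c := by
  refine cirY0_le_of_le_deriv hk.ne' (z := fun s => y s + c)
    (fun s hs => (hder s hs).add_const c)
    (fun s hs => by linarith [hpos s hs, (abs_nonneg _).trans (hφ s hs)]) (fun s hs => ?_) ht
  have hs' := Ico_subset_Icc_self hs
  have hφs := abs_le.1 (hφ s hs')
  exact antitoneOn_div_sub_mul hα hk.le (show 0 < y s + φ s by linarith [hpos s hs'])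
    (show 0 < y s + c by linarith [hpos s hs']) (by linarith)

end Perturbed

theorem stmt_8_general (α σ k T θ t₀ η r y₀ : ℝ) (hα : 0 ≤ α) (hσ : 0 < σ) (hk : 0 < k)
    (hT : 0 < T)
    (hr : 0 < σ * r) (hηr : σ * r ≤ η)
    (φ : ℝ → ℝ)
    (hφr : ∀ t ∈ Set.Icc t₀ (t₀ + θ), |φ t| ≤ r)
    (y : ℝ → ℝ) (hinit : y t₀ = y₀) (hy₀ : η ≤ y₀)
    (hpos : ∀ t ∈ Set.Icc t₀ (t₀ + θ), σ / 2 * r < y t)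
    (hder : ∀ t ∈ Set.Icc t₀ (t₀ + θ), HasDerivWithinAt y
      (α / (y t + σ / 2 * φ t) - k / 2 * (y t + σ / 2 * φ t)) (Set.Icc t₀ (t₀ + θ)) t) :
    let C : ℝ := σ * k / 2 + 4 * α * σ / (3 * η ^ 2) * Real.exp (k * T / 2)
    ∀ t ∈ Set.Icc t₀ (t₀ + θ),
      |y t - cirY0 k α t₀ y₀ t| ≤ C * r * (t - t₀) ∧ C * r * (t - t₀) ≤ C * r * θ := by
  intro C t ht
  set c := σ / 2 * r with hc_def
  have hη : 0 < η := hr.trans_le hηr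
  have hr0 : 0 < r := pos_of_mul_pos_right hr hσ.le
  have hσφ : ∀ s ∈ Icc t₀ (t₀ + θ), |σ / 2 * φ s| ≤ c := fun s hs => by
    rw [abs_mul, abs_of_pos (half_pos hσ)]
    exact mul_le_mul_of_nonneg_left (hφr s hs) (half_pos hσ).le
  have hlow := sub_le_cirY0_sub hα hk hσφ hpos hder ht
  have hup := cirY0_add_le_add hα hk hσφ hpos hder ht
  rw [hinit] at hlow hup
  have hτ : 0 ≤ t - t₀ := sub_nonneg.2 ht.1
  have hC : 0 ≤ C := by positivity
  refine ⟨(abs_sub_cirY0_le hk hα ht.1 (by positivity) (by linarith) hlow hup).trans ?_,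
    by gcongr; linarith [ht.2]⟩
  have hexp : 1 ≤ exp (k * T / 2) := one_le_exp (by positivity)
  calc c * (k * (t - t₀) + α * (t - t₀) / ((y₀ - c) * y₀))
      ≤ c * (k * (t - t₀) + α * (t - t₀) / (η ^ 2 / 2)) := by
        gcongr
        nlinarith
    _ = (σ * k / 2 + α * σ / η ^ 2) * r * (t - t₀) := by
        field_simp
        ring
    _ ≤ (σ * k / 2 + 4 * α * σ / (3 * η ^ 2) * exp (k * T / 2)) * r * (t - t₀) := by
        gcongr
        calc α * σ / η ^ 2 = 4 * α * σ / (3 * η ^ 2) * (3 / 4) := by field_simp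
          _ ≤ 4 * α * σ / (3 * η ^ 2) * exp (k * T / 2) := by gcongr; linarith

theorem stmt_8 (α σ k T θ t₀ η r y₀ : ℝ) (hα : 0 ≤ α) (hσ : 0 < σ) (hk : 0 < k)
    (hT : 0 < T) (hθ0 : 0 ≤ θ) (hθT : θ ≤ T) (ht₀ : 0 ≤ t₀)
    (hr : 0 < σ * r) (hηr : σ * r ≤ η)
    (φ : ℝ → ℝ) (hφ : ContinuousOn φ (Set.Icc t₀ (t₀ + θ)))
    (hφr : ∀ t ∈ Set.Icc t₀ (t₀ + θ), |φ t| ≤ r)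
    (y : ℝ → ℝ) (hinit : y t₀ = y₀) (hy₀ : η ≤ y₀)
    (hpos : ∀ t ∈ Set.Icc t₀ (t₀ + θ), σ / 2 * r < y t)
    (hder : ∀ t ∈ Set.Icc t₀ (t₀ + θ), HasDerivWithinAt y
      (α / (y t + σ / 2 * φ t) - k / 2 * (y t + σ / 2 * φ t)) (Set.Icc t₀ (t₀ + θ)) t) :
    let C : ℝ := σ * k / 2 + 4 * α * σ / (3 * η ^ 2) * Real.exp (k * T / 2)
    ∀ t ∈ Set.Icc t₀ (t₀ + θ),
      |y t - cirY0 k α t₀ y₀ t| ≤ C * r * (t - t₀) ∧ C * r * (t - t₀) ≤ C * r * θ :=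
  stmt_8_general α σ k T θ t₀ η r y₀ hα hσ hk hT hr hηr φ hφr y hinit hy₀ hpos hder
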